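/- Let n ≥ 1, let p = 1 + 2/n (the long range exponent), let a > 0, and let g_a(x) = e^{−a|x|²/2}. Then for every x ∈ ℝⁿ, the integral ∫₀^{∞} |𝓕(|U(t)g_a|^{p−1} U(t)g_a)(x)| dt diverges (it is +∞), due to a logarithmic divergence at t = ∞: the integrand is asymptotic to a constant multiple of 1/t as t → +∞. -/

import Mathlib

/-!
Gaussians stay Gaussians under every operation involved. With `B = 1/a + i t`,
`U(t) g_a` is a Gaussian of complex width `B⁻¹` and amplitude `(a B)^{-n/2}`, so
`|U(t) g_a|^{p-1}` has size `|a B|^{-n(p-1)/2}`, which for `p = 1 + 2/n` is exactly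
`(a |B|)⁻¹ ∼ 1/(a t)`. The product `|U(t) g_a|^{p-1} U(t) g_a` is again a Gaussian, of width
`conj(p/a + i t) / |B|²`, whose Fourier transform is explicit; apart from the factor
`(a |B|)⁻¹` its modulus at `x` converges to `a^{-n/2} e^{-p|x|²/(2a)} > 0`. Hence the
integrand is asymptotic to a positive multiple of `1/t`, which is not integrable at infinity.
-/

open MeasureTheory Real Complex Filter
open scoped RealInnerProductSpace ENNReal Topology

noncomputable section

/-- `ℝⁿ` as a Euclidean space. -/
abbrev Rn (n : ℕ) := EuclideanSpace ℝ (Fin n)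

/-- The Fourier transform `𝓕 f (ξ) = (2π)^{-n/2} ∫ f(x) e^{-i x·ξ} dx`. -/
def FT (n : ℕ) (f : Rn n → ℂ) (ξ : Rn n) : ℂ :=
  (((2 * π) ^ (-(n : ℝ) / 2) : ℝ) : ℂ) *
    ∫ x : Rn n, f x * Complex.exp (-(Complex.I * ((⟪x, ξ⟫ : ℝ) : ℂ)))

/-- The inverse Fourier transform. -/
def FTinv (n : ℕ) (f : Rn n → ℂ) (x : Rn n) : ℂ :=
  (((2 * π) ^ (-(n : ℝ) / 2) : ℝ) : ℂ) *
    ∫ ξ : Rn n, f ξ * Complex.exp (Complex.I * ((⟪x, ξ⟫ : ℝ) : ℂ))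

/-- The free Schrödinger group `U(t) = e^{i(t/2)Δ}`, defined on the Fourier side by
`𝓕(U(t)f)(ξ) = e^{-i(t/2)|ξ|²} 𝓕f(ξ)`. -/
def Ugrp (n : ℕ) (t : ℝ) (f : Rn n → ℂ) : Rn n → ℂ :=
  FTinv n fun ξ => Complex.exp (-(Complex.I * ((t / 2 : ℝ) : ℂ) * ((‖ξ‖ ^ 2 : ℝ) : ℂ))) * FT n f ξ

/-- The nonlinearity `f ↦ |f|^{p-1} f`. -/
def nlin (p : ℝ) {n : ℕ} (f : Rn n → ℂ) (x : Rn n) : ℂ :=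
  ((‖f x‖ ^ (p - 1) : ℝ) : ℂ) * f x

/-- `δ(r) = n/2 - n/r`. -/
def sdelta (n : ℕ) (r : ℝ) : ℝ := n / 2 - n / r

/-- The integrand `e^{i(t/2)|ξ|²} 𝓕(|U(t)φ|^{p-1}U(t)φ)(ξ)`. -/
def lhsInt (n : ℕ) (p : ℝ) (φ : Rn n → ℂ) (t : ℝ) (ξ : Rn n) : ℂ :=
  Complex.exp (Complex.I * ((t / 2 : ℝ) : ℂ) * ((‖ξ‖ ^ 2 : ℝ) : ℂ)) *
    FT n (nlin p (Ugrp n t φ)) ξ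

/-- The integrand `|t|^{n(p-1)/2-2} U(t)(|U(-t)𝓕φ|^{p-1}U(-t)𝓕φ)(ξ)`. -/
def rhsInt (n : ℕ) (p : ℝ) (φ : Rn n → ℂ) (t : ℝ) (ξ : Rn n) : ℂ :=
  ((|t| ^ ((n : ℝ) * (p - 1) / 2 - 2) : ℝ) : ℂ) *
    Ugrp n t (nlin p (Ugrp n (-t) (FT n φ))) ξ

/-- The same integrand without the power of `t` (for `p = 1 + 4/n` the power vanishes). -/
def rhsInt0 (n : ℕ) (p : ℝ) (φ : Rn n → ℂ) (t : ℝ) (ξ : Rn n) : ℂ :=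
  Ugrp n t (nlin p (Ugrp n (-t) (FT n φ))) ξ

/-- The Gaussian `g_a(x) = e^{-a|x|²/2}`. -/
def gauss (n : ℕ) (a : ℝ) (x : Rn n) : ℂ :=
  Complex.exp (-((a * ‖x‖ ^ 2 / 2 : ℝ) : ℂ))

end

open scoped ComplexConjugate

theorem FT_const_mul (n : ℕ) (c : ℂ) (f : Rn n → ℂ) (ξ : Rn n) :
    FT n (fun y => c * f y) ξ = c * FT n f ξ := by
  simp only [FT, mul_assoc, integral_const_mul]
  ring

theorem FTinv_eq_FT_neg (n : ℕ) (f : Rn n → ℂ) (x : Rn n) : FTinv n f x = FT n f (-x) := by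
  simp only [FTinv, FT, inner_neg_right, real_inner_comm x, ofReal_neg, mul_neg, neg_neg]

theorem FTinv_const_mul (n : ℕ) (c : ℂ) (f : Rn n → ℂ) (x : Rn n) :
    FTinv n (fun y => c * f y) x = c * FTinv n f x := by
  rw [FTinv_eq_FT_neg, FTinv_eq_FT_neg, FT_const_mul]

noncomputable def cgauss (n : ℕ) (b : ℂ) (x : Rn n) : ℂ :=
  cexp (-(b / 2) * (‖x‖ : ℂ) ^ 2)

theorem norm_cgauss (n : ℕ) (b : ℂ) (x : Rn n) :
    ‖cgauss n b x‖ = rexp (-(b.re / 2) * ‖x‖ ^ 2) := by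
  rw [cgauss, norm_exp, ← ofReal_pow, re_mul_ofReal]
  simp

theorem gauss_eq_cgauss (n : ℕ) (a : ℝ) : gauss n a = cgauss n a := by
  ext x
  simp only [gauss, cgauss]
  push_cast
  ring_nf

theorem ofReal_mul_cpow {r : ℝ} (hr : 0 < r) {z : ℂ} (hz : z ≠ 0) (w : ℂ) :
    ((r : ℂ) * z) ^ w = (r : ℂ) ^ w * z ^ w := by
  rw [cpow_def_of_ne_zero (mul_ne_zero (ofReal_ne_zero.2 hr.ne') hz), log_ofReal_mul hr hz,
    cpow_def_of_ne_zero (ofReal_ne_zero.2 hr.ne'), cpow_def_of_ne_zero hz, ← Complex.exp_add,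
    ofReal_log hr.le]
  ring_nf

theorem FT_cgauss (n : ℕ) {b : ℂ} (hb : 0 < b.re) (ξ : Rn n) :
    FT n (cgauss n b) ξ = (b ^ ((n : ℂ) / 2))⁻¹ * cgauss n b⁻¹ ξ := by
  have hb0 : b ≠ 0 := ne_zero_of_re_pos hb
  have h2π : (0 : ℝ) < 2 * π := by positivity
  have hint := GaussianFourier.integral_cexp_neg_mul_sq_norm_add
    (show 0 < (b / 2).re by simpa using hb) (-I) ξ
  simp only [finrank_euclideanSpace_fin] at hint
  have hconst : (((2 * π) ^ (-(n : ℝ) / 2) : ℝ) : ℂ) * (↑π / (b / 2)) ^ ((n : ℂ) / 2)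
      = (b ^ ((n : ℂ) / 2))⁻¹ := by
    rw [show (π : ℂ) / (b / 2) = ((2 * π : ℝ) : ℂ) * b⁻¹ by push_cast; field_simp,
      ofReal_mul_cpow h2π (inv_ne_zero hb0), inv_cpow _ _ (arg_lt_pi_iff.2 (Or.inl hb.le)).ne,
      ofReal_cpow h2π.le, neg_div, ofReal_neg, cpow_neg, ← mul_assoc]
    push_cast
    rw [inv_mul_cancel₀ (cpow_ne_zero_iff.2 (Or.inl (by simp [pi_ne_zero]))), one_mul]
  rw [FT, ← hconst, mul_assoc, cgauss]
  congr 1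
  convert hint using 2
  · ext x
    rw [cgauss, ← Complex.exp_add, real_inner_comm]
    ring_nf
  · rw [neg_sq, I_sq]
    congr 1
    field_simp
    ring

theorem re_inv_pos {b : ℂ} (hb : 0 < b.re) : 0 < b⁻¹.re := by
  rw [inv_re]
  exact div_pos hb (normSq_pos.2 (ne_zero_of_re_pos hb))

theorem norm_inv_cpow_natCast_div_two (n : ℕ) (z : ℂ) :
    ‖(z ^ ((n : ℂ) / 2))⁻¹‖ = ‖z‖ ^ (-(n : ℝ) / 2) := by
  rw [norm_inv, show (n : ℂ) / 2 = ((n / 2 : ℝ) : ℂ) by push_cast; rfl, norm_cpow_real, neg_div,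
    rpow_neg (norm_nonneg _)]

theorem Ugrp_cgauss (n : ℕ) {b : ℂ} (hb : 0 < b.re) (t : ℝ) :
    Ugrp n t (cgauss n b) = fun y =>
      (b ^ ((n : ℂ) / 2))⁻¹ * ((b⁻¹ + I * t) ^ ((n : ℂ) / 2))⁻¹ * cgauss n (b⁻¹ + I * t)⁻¹ y := by
  have hB : 0 < (b⁻¹ + I * t).re := by simpa using re_inv_pos hb
  have hmul : (fun ξ : Rn n =>
      cexp (-(I * ((t / 2 : ℝ) : ℂ) * ((‖ξ‖ ^ 2 : ℝ) : ℂ))) * FT n (cgauss n b) ξ)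
      = fun ξ => (b ^ ((n : ℂ) / 2))⁻¹ * cgauss n (b⁻¹ + I * t) ξ := by
    ext ξ
    rw [FT_cgauss n hb, mul_left_comm, cgauss, cgauss, ← Complex.exp_add]
    push_cast
    ring_nf
  ext y
  rw [Ugrp, hmul, FTinv_const_mul, FTinv_eq_FT_neg, FT_cgauss n hB, mul_assoc]
  simp only [cgauss, norm_neg]

theorem nlin_const_mul_cgauss (n : ℕ) (p : ℝ) (c w : ℂ) :
    nlin p (fun y : Rn n => c * cgauss n w y)
      = fun y => ((‖c‖ ^ (p - 1) : ℝ) * c) * cgauss n ((p - 1) * w.re + w) y := by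
  ext y
  rw [nlin, norm_mul, norm_cgauss, mul_rpow (norm_nonneg _) (exp_pos _).le, ← Real.exp_mul,
    cgauss, cgauss]
  push_cast
  rw [mul_mul_mul_comm, ← Complex.exp_add]
  ring_nf

theorem norm_FT_nlin_const_mul_cgauss (n : ℕ) {p : ℝ} (hp : 0 < p) (c : ℂ) {w : ℂ}
    (hw : 0 < w.re) (x : Rn n) :
    ‖FT n (nlin p (fun y => c * cgauss n w y)) x‖
      = ‖c‖ ^ (p - 1) * ‖c‖ * ‖(p - 1) * w.re + w‖ ^ (-(n : ℝ) / 2)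
        * rexp (-(((p - 1) * w.re + w)⁻¹.re / 2) * ‖x‖ ^ 2) := by
  have hβ : 0 < ((p - 1) * w.re + w : ℂ).re := by
    simp only [add_re, ← ofReal_one, ← ofReal_sub, ← ofReal_mul, ofReal_re]
    nlinarith
  rw [nlin_const_mul_cgauss, FT_const_mul, FT_cgauss n hβ, norm_mul, norm_mul, norm_mul,
    norm_cgauss, norm_inv_cpow_natCast_div_two, norm_real, norm_of_nonneg (by positivity)]
  ring

theorem sub_one_mul_re_inv_add_inv (p s t : ℝ) :
    ((p : ℂ) - 1) * ((s + I * t : ℂ)⁻¹.re : ℂ) + (s + I * t : ℂ)⁻¹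
      = conj ((p * s : ℝ) + I * t : ℂ) / normSq (s + I * t : ℂ) := by
  have hre : (s + I * t : ℂ)⁻¹.re = s / normSq (s + I * t : ℂ) := by simp [inv_re]
  rw [hre, inv_def]
  simp only [map_add, map_mul, conj_ofReal, conj_I, ofReal_div, ofReal_mul, ofReal_inv]
  ring

theorem norm_conj_div_normSq (z w : ℂ) :
    ‖conj z / normSq w‖ = ‖z‖ / ‖w‖ ^ 2 := by
  rw [norm_div, norm_conj, normSq_eq_norm_sq, norm_real, norm_of_nonneg (by positivity)]

theorem re_inv_conj_div_normSq (z w : ℂ) :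
    (conj z / normSq w)⁻¹.re = z.re * (‖w‖ / ‖z‖) ^ 2 := by
  rw [inv_div, div_re, conj_re, normSq_conj, normSq_eq_norm_sq, normSq_eq_norm_sq]
  simp only [ofReal_re, ofReal_im, zero_mul, div_pow]
  ring

theorem norm_FT_nlin_Ugrp_gauss (n : ℕ) {p : ℝ} (hp : 0 < p) {a : ℝ} (ha : 0 < a) (x : Rn n)
    (t : ℝ) :
    ‖FT n (nlin p (Ugrp n t (gauss n a))) x‖
      = (a * ‖(a⁻¹ : ℝ) + I * t‖) ^ (-(n : ℝ) / 2 * (p - 1))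
        * (a * (‖(p * a⁻¹ : ℝ) + I * t‖ / ‖(a⁻¹ : ℝ) + I * t‖)) ^ (-(n : ℝ) / 2)
        * rexp (-(p * a⁻¹ * (‖(a⁻¹ : ℝ) + I * t‖ / ‖(p * a⁻¹ : ℝ) + I * t‖) ^ 2 / 2) * ‖x‖ ^ 2) := by
  have hB : 0 < ‖((a⁻¹ : ℝ) + I * t : ℂ)‖ :=
    norm_pos_iff.2 fun h => by simpa [ha.ne'] using congrArg re h
  have hc : ‖((a : ℂ) ^ ((n : ℂ) / 2))⁻¹ * (((a⁻¹ : ℝ) + I * t : ℂ) ^ ((n : ℂ) / 2))⁻¹‖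
      = (a * ‖(a⁻¹ : ℝ) + I * t‖) ^ (-(n : ℝ) / 2) := by
    rw [norm_mul, norm_inv_cpow_natCast_div_two, norm_inv_cpow_natCast_div_two, norm_real, norm_of_nonneg ha.le,
      mul_rpow ha.le hB.le]
  rw [gauss_eq_cgauss, Ugrp_cgauss n (by simpa using ha), ← ofReal_inv,
    norm_FT_nlin_const_mul_cgauss n hp _ (re_inv_pos (by simp [ha])),
    sub_one_mul_re_inv_add_inv, norm_conj_div_normSq, re_inv_conj_div_normSq, hc,
    ← rpow_mul (by positivity), mul_assoc (_ ^ (-(n : ℝ) / 2 * (p - 1))),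
    ← mul_rpow (by positivity) (by positivity)]
  have hre : ((p * a⁻¹ : ℝ) + I * t : ℂ).re = p * a⁻¹ := by simp
  rw [hre]
  congr 3
  field_simp

theorem tendsto_norm_ofReal_add_I_mul_div_self (s : ℝ) :
    Tendsto (fun t : ℝ => ‖(s : ℂ) + I * t‖ / t) atTop (𝓝 1) := by
  have hcont : Tendsto (fun u : ℝ => ‖(u : ℂ) + I‖) (𝓝 0) (𝓝 1) := by
    simpa using ((continuous_ofReal.add continuous_const).norm.tendsto 0 :
      Tendsto (fun u : ℝ => ‖(u : ℂ) + I‖) _ _)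
  refine (hcont.comp ((tendsto_const_nhds (x := s)).div_atTop tendsto_id)).congr' ?_
  filter_upwards [eventually_gt_atTop 0] with t ht
  rw [Function.comp_apply, ← norm_of_nonneg ht.le, ← norm_real t, ← norm_div, norm_real,
    norm_of_nonneg ht.le]
  push_cast [id_eq]
  rw [add_div, mul_div_cancel_right₀ _ (ofReal_ne_zero.2 ht.ne')]

theorem tendsto_mul_norm_FT_nlin_Ugrp_gauss {n : ℕ} (hn : 1 ≤ n) {p : ℝ}
    (hp : p = 1 + 2 / (n : ℝ)) {a : ℝ} (ha : 0 < a) (x : Rn n) :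
    Tendsto (fun t : ℝ => t * ‖FT n (nlin p (Ugrp n t (gauss n a))) x‖) atTop
      (𝓝 (a⁻¹ * a ^ (-(n : ℝ) / 2) * rexp (-(p * a⁻¹ / 2) * ‖x‖ ^ 2))) := by
  have hn0 : (n : ℝ) ≠ 0 := by exact_mod_cast (Nat.one_le_iff_ne_zero.1 hn)
  have hp0 : 0 < p := by rw [hp]; positivity
  have hdecay : -(n : ℝ) / 2 * (p - 1) = -1 := by rw [hp]; field_simp; ring
  have hB := tendsto_norm_ofReal_add_I_mul_div_self a⁻¹
  have hBp := tendsto_norm_ofReal_add_I_mul_div_self (p * a⁻¹)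
  have hsize : Tendsto (fun t : ℝ => (a * (‖(a⁻¹ : ℝ) + I * t‖ / t))⁻¹) atTop (𝓝 a⁻¹) := by
    simpa using (hB.const_mul a).inv₀ (by simpa using ha.ne')
  have hwidth : Tendsto (fun t : ℝ =>
      (a * ((‖(p * a⁻¹ : ℝ) + I * t‖ / t) / (‖(a⁻¹ : ℝ) + I * t‖ / t))) ^ (-(n : ℝ) / 2))
      atTop (𝓝 (a ^ (-(n : ℝ) / 2))) := by
    simpa using ((hBp.div hB one_ne_zero).const_mul a).rpow_const (Or.inl (by simpa using ha.ne'))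
  have hgauss : Tendsto (fun t : ℝ =>
      rexp (-(p * a⁻¹ * ((‖(a⁻¹ : ℝ) + I * t‖ / t) / (‖(p * a⁻¹ : ℝ) + I * t‖ / t)) ^ 2 / 2)
        * ‖x‖ ^ 2)) atTop (𝓝 (rexp (-(p * a⁻¹ / 2) * ‖x‖ ^ 2))) := by
    refine (Real.continuous_exp.tendsto _).comp ?_
    simpa using ((((hB.div hBp one_ne_zero).pow 2).const_mul (p * a⁻¹)).div_const 2).neg.mul_const
      (‖x‖ ^ 2)
  refine ((hsize.mul hwidth).mul hgauss).congr' ?_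
  filter_upwards [eventually_gt_atTop 0] with t ht
  rw [norm_FT_nlin_Ugrp_gauss n hp0 ha, hdecay, rpow_neg_one, div_div_div_cancel_right₀ ht.ne',
    div_div_div_cancel_right₀ ht.ne']
  field_simp

theorem lintegral_Ioi_ofReal_inv_eq_top {T : ℝ} (hT : 0 ≤ T) :
    ∫⁻ t in Set.Ioi T, ENNReal.ofReal t⁻¹ = ⊤ := by
  by_contra h
  refine not_integrableOn_Ioi_inv
    ((lintegral_ofReal_ne_top_iff_integrable measurable_inv.aestronglyMeasurable ?_).1 h)
  filter_upwards [ae_restrict_mem measurableSet_Ioi] with t ht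
  exact inv_nonneg.2 (hT.trans ht.le)

theorem lintegral_Ioi_ofReal_eq_top_of_tendsto_mul {f : ℝ → ℝ} {c : ℝ} (hc : 0 < c)
    (hf : Tendsto (fun t => t * f t) atTop (𝓝 c)) (s : ℝ) :
    ∫⁻ t in Set.Ioi s, ENNReal.ofReal (f t) = ⊤ := by
  obtain ⟨T, hT⟩ := eventually_atTop.1
    ((hf.eventually (lt_mem_nhds (half_lt_self hc))).and (eventually_gt_atTop 0))
  have hT0 : 0 < max T s := (hT T le_rfl).2.trans_le (le_max_left _ _)
  refine top_unique ?_
  calc ⊤ = ENNReal.ofReal (c / 2) * ∫⁻ t in Set.Ioi (max T s), ENNReal.ofReal t⁻¹ := by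
        rw [lintegral_Ioi_ofReal_inv_eq_top hT0.le, ENNReal.mul_top (by simpa using hc)]
    _ = ∫⁻ t in Set.Ioi (max T s), ENNReal.ofReal (c / 2 * t⁻¹) := by
        rw [← lintegral_const_mul _ measurable_inv.ennreal_ofReal]
        simp only [ENNReal.ofReal_mul (half_pos hc).le]
    _ ≤ ∫⁻ t in Set.Ioi (max T s), ENNReal.ofReal (f t) := by
        refine setLIntegral_mono' measurableSet_Ioi fun t ht => ENNReal.ofReal_le_ofReal ?_
        obtain ⟨hlt, hpos⟩ := hT t (le_max_left _ _ |>.trans ht.le)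
        rw [← div_eq_mul_inv, div_le_iff₀ hpos, mul_comm]
        exact hlt.le
    _ ≤ ∫⁻ t in Set.Ioi s, ENNReal.ofReal (f t) :=
        lintegral_mono_set (Set.Ioi_subset_Ioi (le_max_right _ _))

/-- **Long range divergence of the first integral**: for the long range exponent
`p = 1 + 2/n`, `a > 0` and every `x`, `∫₀^∞ |𝓕(|U(t)g_a|^{p-1}U(t)g_a)(x)| dt = +∞`,
the integrand being asymptotic to a (positive) constant multiple of `1/t` as `t → +∞`. -/
theorem longrange_divergence_lhs (n : ℕ) (hn : 1 ≤ n) (p : ℝ) (hp : p = 1 + 2 / (n : ℝ))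
    (a : ℝ) (ha : 0 < a) (x : Rn n) :
    (∫⁻ t in Set.Ioi (0 : ℝ),
        ENNReal.ofReal ‖FT n (nlin p (Ugrp n t (gauss n a))) x‖) = ⊤ ∧
    ∃ c : ℝ, 0 < c ∧
      Tendsto (fun t : ℝ => t * ‖FT n (nlin p (Ugrp n t (gauss n a))) x‖) atTop (𝓝 c) := by
  have hlim := tendsto_mul_norm_FT_nlin_Ugrp_gauss hn hp ha x
  have hpos : 0 < a⁻¹ * a ^ (-(n : ℝ) / 2) * rexp (-(p * a⁻¹ / 2) * ‖x‖ ^ 2) := by positivity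
  exact ⟨lintegral_Ioi_ofReal_eq_top_of_tendsto_mul hpos hlim 0, _, hpos, hlim⟩
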